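/- arXiv:2007.12509 — 9 statements merged into one kernel-verified Lean document; each statement's English description precedes it below -/
import Mathlib

section
/- The sets of maximizers of the two functions a ↦ q(a) + c·π_θ(a)·√N/(1 + n(a)) and a ↦ π_θ(a)·(1/π̂(a) − 1/π̄(a)) over 𝒜 coincide. (Equivalently, AlphaZero's action selection formula can be rewritten as argmax_a π_θ(a)·(1/π̂(a) − 1/π̄(a)).) -/
/-!
With `K = |𝒜| + N` we have `1 / π̂(a) = K / (1 + n(a))`, `λ_N · K = c·√N` and
`π_θ(a) / π̄(a) = (α − q(a)) / λ_N`, so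
`q(a) + c·π_θ(a)·√N / (1 + n(a)) = λ_N · π_θ(a)·(1/π̂(a) − 1/π̄(a)) + α`.
The AlphaZero score is thus an increasing affine function of the rewritten one, and the two have
the same maximizers.
-/

theorem setOf_forall_le_comp_eq_of_strictMono {ι α β : Type*} [LinearOrder α] [Preorder β]
    {φ : α → β} (hφ : StrictMono φ) (g : ι → α) :
    {a | ∀ b, φ (g b) ≤ φ (g a)} = {a | ∀ b, g b ≤ g a} := by
  simp only [hφ.le_iff_le]

theorem add_mul_div_eq_mul_sub_inv_add {q p r m K c α : ℝ}
    (hK : K ≠ 0) (hc : c ≠ 0) (hr : r ≠ 0) (hp : p ≠ 0) :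
    q + c * p * r / m = c * r / K * (p * (1 / (m / K) - 1 / (c * r / K * p / (α - q)))) + α := by
  simp only [one_div, inv_div]
  field_simp
  ring

theorem alphazero_selection_rewrite_general
    {A : Type*} [Fintype A]
    (n q piTheta : A → ℝ) (c α : ℝ)
    (hN : 0 < ∑ b, n b)
    (hc : 0 < c)
    (hpiTheta : ∀ a, 0 < piTheta a)
    (lam : ℝ)
    (hlam : lam = c * Real.sqrt (∑ b, n b) / ((Fintype.card A : ℝ) + ∑ b, n b))
    (pihat pibar : A → ℝ)
    (hpihat : ∀ a, pihat a = (1 + n a) / ((Fintype.card A : ℝ) + ∑ b, n b))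
    (hpibar : ∀ a, pibar a = lam * piTheta a / (α - q a)) :
    {a | ∀ b, q b + c * piTheta b * Real.sqrt (∑ b', n b') / (1 + n b)
          ≤ q a + c * piTheta a * Real.sqrt (∑ b', n b') / (1 + n a)}
    = {a | ∀ b, piTheta b * (1 / pihat b - 1 / pibar b)
          ≤ piTheta a * (1 / pihat a - 1 / pibar a)} := by
  have hK : 0 < (Fintype.card A : ℝ) + ∑ b, n b := by positivity
  have hsqrt : 0 < Real.sqrt (∑ b, n b) := Real.sqrt_pos.mpr hN
  have hlam_pos : 0 < lam := hlam ▸ by positivity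
  have hscore : ∀ a, q a + c * piTheta a * Real.sqrt (∑ b, n b) / (1 + n a)
      = lam * (piTheta a * (1 / pihat a - 1 / pibar a)) + α := fun a => by
    rw [hpihat, hpibar, hlam]
    exact add_mul_div_eq_mul_sub_inv_add hK.ne' hc.ne' hsqrt.ne' (hpiTheta a).ne'
  simp only [hscore]
  exact setOf_forall_le_comp_eq_of_strictMono
    ((strictMono_mul_left_of_pos hlam_pos).add_const α) _

/-- AlphaZero's action selection formula rewritten: the maximizers of
`a ↦ q a + c·πθ a·√N/(1 + n a)` coincide with the maximizers of
`a ↦ πθ a · (1/π̂ a − 1/π̄ a)`. -/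
theorem alphazero_selection_rewrite
    {A : Type*} [Fintype A] [Nonempty A]
    (n q piTheta : A → ℝ) (c α : ℝ)
    (hn : ∀ b, 0 ≤ n b)
    (hN : 0 < ∑ b, n b)
    (hc : 0 < c)
    (hpiTheta : ∀ a, 0 < piTheta a)
    (hpiThetaSum : ∑ a, piTheta a = 1)
    (hα : ∀ b, q b < α)
    (lam : ℝ)
    (hlam : lam = c * Real.sqrt (∑ b, n b) / ((Fintype.card A : ℝ) + ∑ b, n b))
    (pihat pibar : A → ℝ)
    (hpihat : ∀ a, pihat a = (1 + n a) / ((Fintype.card A : ℝ) + ∑ b, n b))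
    (hpibar : ∀ a, pibar a = lam * piTheta a / (α - q a))
    (hpibarSum : ∑ a, pibar a = 1) :
    {a | ∀ b, q b + c * piTheta b * Real.sqrt (∑ b', n b') / (1 + n b)
          ≤ q a + c * piTheta a * Real.sqrt (∑ b', n b') / (1 + n a)}
    = {a | ∀ b, piTheta b * (1 / pihat b - 1 / pibar b)
          ≤ piTheta a * (1 / pihat a - 1 / pibar a)} :=
  alphazero_selection_rewrite_general n q piTheta c α hN hc hpiTheta lam hlam pihat pibar hpihat
    hpibar
end

section
/- Proposition 1: An action a* maximizes AlphaZero's selection criterion a ↦ q(a) + c·π_θ(a)·√N/(1 + n(a)) over 𝒜 if and only if a* maximizes a ↦ ∂/∂n(a) [ q·π̂(m) − λ_N·KL[π_θ, π̂(m)] ] evaluated at m = n, where the counts m : 𝒜 → ℝ are extended to real values, π̂(m)(b) = (1 + m(b))/(|𝒜| + ∑_c m(c)), the partial derivative is taken coordinatewise in m(a), and the multiplier λ_N = c·√N/(|𝒜| + N) is held fixed at its value at m = n. -/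
/-!
Write `D = |𝒜| + ∑ m` and `π̂ = π̂(m)`. Moving `m(a)` moves `D` at unit speed, so
`∂π̂(b)/∂m(a) = (δ_ab - π̂(b)) / D`; hence `∂(q·π̂)/∂m(a) = (q(a) - q·π̂) / D` and
`∂ KL[π_θ, π̂]/∂m(a) = (1 - π_θ(a)/π̂(a)) / D`. At `m = n` we have `λ_N · D = c√N`, so the
gradient in direction `a` is `(q(a) + c π_θ(a) √N / (1 + n(a)) - C) / D` with `C` independent of
`a`: a positive affine image of AlphaZero's selection score, with the same maximizers.
-/

open Real Finset Function

namespace AlphaZero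

theorem hasDerivAt_update_apply {ι : Type*} [DecidableEq ι] (m : ι → ℝ) (a b : ι) (t : ℝ) :
    HasDerivAt (fun s => update m a s b) ((Pi.single a 1 : ι → ℝ) b) t :=
  hasDerivAt_pi.1 (hasDerivAt_update m a t) b

variable {ι : Type*} [Fintype ι]

def visitMass (m : ι → ℝ) : ℝ := Fintype.card ι + ∑ b, m b

noncomputable def visitDist (m : ι → ℝ) (b : ι) : ℝ := (1 + m b) / visitMass m

noncomputable def kl (p r : ι → ℝ) : ℝ := ∑ b, p b * log (p b / r b)

-- `lam` is a parameter rather than a function of `m`: the paper holds `λ_N` fixed when differentiating.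
noncomputable def objective (q p : ι → ℝ) (lam : ℝ) (m : ι → ℝ) : ℝ :=
  ∑ b, q b * visitDist m b - lam * kl p (visitDist m)

theorem visitMass_pos [Nonempty ι] {m : ι → ℝ} (hm : ∀ b, 0 ≤ m b) : 0 < visitMass m :=
  add_pos_of_pos_of_nonneg (by exact_mod_cast Fintype.card_pos) (sum_nonneg fun b _ => hm b)

variable [DecidableEq ι]

theorem hasDerivAt_visitMass_update (m : ι → ℝ) (a : ι) (t : ℝ) :
    HasDerivAt (fun s => visitMass (update m a s)) 1 t := by
  have hsum := HasDerivAt.fun_sum (u := univ) fun b _ => hasDerivAt_update_apply m a b t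
  rw [Fintype.sum_pi_single'] at hsum
  simpa [visitMass] using hsum.const_add (Fintype.card ι : ℝ)

theorem hasDerivAt_visitDist_update {m : ι → ℝ} (hm : visitMass m ≠ 0) (a b : ι) :
    HasDerivAt (fun s => visitDist (update m a s) b)
      (((Pi.single a 1 : ι → ℝ) b - visitDist m b) / visitMass m) (m a) := by
  have hnum := (hasDerivAt_update_apply m a b (m a)).const_add 1
  have hquot := hnum.fun_div (hasDerivAt_visitMass_update m a (m a)) (by rwa [update_eq_self])
  simp only [update_eq_self] at hquot
  refine hquot.congr_deriv ?_
  unfold visitDist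
  field_simp

theorem hasDerivAt_sum_mul_visitDist_update (q : ι → ℝ) {m : ι → ℝ} (hm : visitMass m ≠ 0)
    (a : ι) :
    HasDerivAt (fun s => ∑ b, q b * visitDist (update m a s) b)
      ((q a - ∑ b, q b * visitDist m b) / visitMass m) (m a) := by
  refine (HasDerivAt.fun_sum (u := univ) fun b _ =>
    (hasDerivAt_visitDist_update hm a b).const_mul (q b)).congr_deriv ?_
  simp [mul_div_assoc', ← sum_div, mul_sub, sum_sub_distrib, Pi.single_apply]

theorem hasDerivAt_kl_visitDist_update {p m : ι → ℝ} (hp : ∀ b, p b ≠ 0)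
    (hm : ∀ b, 1 + m b ≠ 0) (hM : visitMass m ≠ 0) (a : ι) :
    HasDerivAt (fun s => kl p (visitDist (update m a s)))
      ((∑ b, p b - p a / visitDist m a) / visitMass m) (m a) := by
  have hr : ∀ b, visitDist m b ≠ 0 := fun b => div_ne_zero (hm b) hM
  have hterm : ∀ b, HasDerivAt (fun s => p b * log (p b / visitDist (update m a s) b))
      (p b * ((visitDist m b - (Pi.single a 1 : ι → ℝ) b) / (visitDist m b * visitMass m)))
      (m a) := by
    intro b
    have hinner := (hasDerivAt_const (m a) (p b)).fun_div (hasDerivAt_visitDist_update hM a b)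
      (by rw [update_eq_self]; exact hr b)
    simp only [update_eq_self] at hinner
    have hlog := hinner.log (by rw [update_eq_self]; exact div_ne_zero (hp b) (hr b))
    simp only [update_eq_self] at hlog
    refine (hlog.const_mul (p b)).congr_deriv ?_
    have := hp b
    have := hr b
    field_simp
    ring
  refine (HasDerivAt.fun_sum (u := univ) fun b _ => hterm b).congr_deriv ?_
  have hsplit : ∀ b, p b * ((visitDist m b - (Pi.single a 1 : ι → ℝ) b) /
      (visitDist m b * visitMass m)) =
      p b / visitMass m - (Pi.single a (p a / visitDist m a) : ι → ℝ) b / visitMass m := by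
    intro b
    have := hr b
    rcases eq_or_ne b a with rfl | hba
    · simp only [Pi.single_eq_same]
      field_simp
    · rw [Pi.single_eq_of_ne hba, Pi.single_eq_of_ne hba, sub_zero, zero_div, sub_zero]
      field_simp
  rw [sum_congr rfl fun b _ => hsplit b, sum_sub_distrib, ← sum_div, ← sum_div,
    Fintype.sum_pi_single', sub_div]

theorem hasDerivAt_objective_update (q : ι → ℝ) {p m : ι → ℝ} (lam : ℝ) (hp : ∀ b, p b ≠ 0)
    (hm : ∀ b, 1 + m b ≠ 0) (hM : visitMass m ≠ 0) (a : ι) :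
    HasDerivAt (fun s => objective q p lam (update m a s))
      ((q a + lam * visitMass m * p a / (1 + m a) -
        (∑ b, q b * visitDist m b + lam * ∑ b, p b)) / visitMass m) (m a) := by
  refine ((hasDerivAt_sum_mul_visitDist_update q hM a).sub
    ((hasDerivAt_kl_visitDist_update hp hm hM a).const_mul lam)).congr_deriv ?_
  have := hm a
  unfold visitDist
  field_simp
  ring

end AlphaZero

open AlphaZero

theorem alphazero_selection_is_gradient_ascent_general
    {A : Type*} [Fintype A] [DecidableEq A]
    (n q piTheta : A → ℝ) (c : ℝ)
    (hn : ∀ b, 0 ≤ n b)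
    (hpiTheta : ∀ a, 0 < piTheta a)
    (hpiThetaSum : ∑ a, piTheta a = 1)
    (lam : ℝ)
    (hlam : lam = c * Real.sqrt (∑ b, n b) / ((Fintype.card A : ℝ) + ∑ b, n b))
    (g : A → ℝ)
    (hg : ∀ a, g a = deriv (fun t : ℝ =>
        (∑ b, q b * ((1 + Function.update n a t b) /
            ((Fintype.card A : ℝ) + ∑ c', Function.update n a t c')))
        - lam * ∑ b, piTheta b * Real.log (piTheta b /
            ((1 + Function.update n a t b) /
              ((Fintype.card A : ℝ) + ∑ c', Function.update n a t c')))) (n a))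
    (astar : A) :
    (∀ b, q b + c * piTheta b * Real.sqrt (∑ b', n b') / (1 + n b)
        ≤ q astar + c * piTheta astar * Real.sqrt (∑ b', n b') / (1 + n astar))
    ↔ (∀ b, g b ≤ g astar) := by
  have : Nonempty A := ⟨astar⟩
  have hM : 0 < visitMass n := visitMass_pos hn
  have hlamM : lam * visitMass n = c * √(∑ b, n b) := by
    rw [hlam]
    exact div_mul_cancel₀ _ hM.ne'
  have hgrad : ∀ a, g a = (q a + c * piTheta a * √(∑ b, n b) / (1 + n a) -
      (∑ b, q b * visitDist n b + lam)) / visitMass n := by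
    intro a
    have hderiv := hasDerivAt_objective_update q lam (fun b => (hpiTheta b).ne')
      (fun b => by linarith [hn b]) hM.ne' a
    rw [hg a]
    change deriv (fun t => objective q piTheta lam (update n a t)) (n a) = _
    rw [hderiv.deriv, hpiThetaSum, mul_one, hlamM, mul_right_comm]
  simp only [hgrad, div_le_div_iff_of_pos_right hM, sub_le_sub_iff_right]

/-- Proposition 1: `a*` maximizes AlphaZero's selection criterion iff it maximizes the
partial derivative (w.r.t. real-valued counts, at the current counts, with `λ_N` held
fixed) of the regularized objective `q·π̂(m) − λ_N·KL[πθ, π̂(m)]`. -/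
theorem alphazero_selection_is_gradient_ascent
    {A : Type*} [Fintype A] [Nonempty A] [DecidableEq A]
    (n q piTheta : A → ℝ) (c : ℝ)
    (hn : ∀ b, 0 ≤ n b)
    (hc : 0 < c)
    (hpiTheta : ∀ a, 0 < piTheta a)
    (hpiThetaSum : ∑ a, piTheta a = 1)
    (lam : ℝ)
    (hlam : lam = c * Real.sqrt (∑ b, n b) / ((Fintype.card A : ℝ) + ∑ b, n b))
    (g : A → ℝ)
    (hg : ∀ a, g a = deriv (fun t : ℝ =>
        (∑ b, q b * ((1 + Function.update n a t b) /
            ((Fintype.card A : ℝ) + ∑ c', Function.update n a t c')))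
        - lam * ∑ b, piTheta b * Real.log (piTheta b /
            ((1 + Function.update n a t b) /
              ((Fintype.card A : ℝ) + ∑ c', Function.update n a t c')))) (n a))
    (astar : A) :
    (∀ b, q b + c * piTheta b * Real.sqrt (∑ b', n b') / (1 + n b)
        ≤ q astar + c * piTheta astar * Real.sqrt (∑ b', n b') / (1 + n astar))
    ↔ (∀ b, g b ≤ g astar) :=
  alphazero_selection_is_gradient_ascent_general n q piTheta c hn hpiTheta hpiThetaSum lam hlam g hg
    astar
end

section
/- Proposition 2: If a* maximizes AlphaZero's selection criterion a ↦ q(a) + c·π_θ(a)·√N/(1 + n(a)) over 𝒜, then π̂(a*) ≤ π̄(a*). -/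
/-!
Both `π̂` and `π̄` are probability vectors, and clearing denominators gives
`π̄(a) - π̂(a) = w(a) · (U(a) - α)` with `w(a) > 0`, where `U` is AlphaZero's selection
criterion. Summing over `a`, the weighted sum of `U(a) - α` vanishes, so `α ≤ U(a)` for
some `a`, hence `α ≤ U(a*)`, and the identity at `a*` gives `π̂(a*) ≤ π̄(a*)`.
-/

open Finset

theorem sum_one_add_div_card_add_sum {A : Type*} [Fintype A] (n : A → ℝ)
    (h : (Fintype.card A : ℝ) + ∑ b, n b ≠ 0) :
    ∑ a, (1 + n a) / ((Fintype.card A : ℝ) + ∑ b, n b) = 1 := by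
  rw [← sum_div, sum_add_distrib, sum_const, card_univ, nsmul_one, div_self h]

theorem mul_div_sub_div_eq_mul_score_sub {c r D p q α m : ℝ} (hD : D ≠ 0) (hq : α - q ≠ 0)
    (hm : m ≠ 0) :
    c * r / D * p / (α - q) - m / D = m / (D * (α - q)) * (q + c * p * r / m - α) := by
  field_simp
  ring

theorem alphazero_pihat_le_pibar_general
    {A : Type*} [Fintype A] [Nonempty A]
    (n q piTheta : A → ℝ) (c α : ℝ)
    (hn : ∀ b, 0 ≤ n b)
    (hα : ∀ b, q b < α)
    (lam : ℝ)
    (hlam : lam = c * Real.sqrt (∑ b, n b) / ((Fintype.card A : ℝ) + ∑ b, n b))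
    (pihat pibar : A → ℝ)
    (hpihat : ∀ a, pihat a = (1 + n a) / ((Fintype.card A : ℝ) + ∑ b, n b))
    (hpibar : ∀ a, pibar a = lam * piTheta a / (α - q a))
    (hpibarSum : ∑ a, pibar a = 1)
    (astar : A)
    (hastar : ∀ b, q b + c * piTheta b * Real.sqrt (∑ b', n b') / (1 + n b)
        ≤ q astar + c * piTheta astar * Real.sqrt (∑ b', n b') / (1 + n astar)) :
    pihat astar ≤ pibar astar := by
  set D : ℝ := (Fintype.card A : ℝ) + ∑ b, n b
  set score : A → ℝ := fun a => q a + c * piTheta a * Real.sqrt (∑ b, n b) / (1 + n a)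
  have hD : 0 < D :=
    add_pos_of_pos_of_nonneg (mod_cast Fintype.card_pos) (sum_nonneg fun b _ => hn b)
  have hm : ∀ a, 0 < 1 + n a := fun a => by linarith [hn a]
  have hgap : ∀ a, 0 < α - q a := fun a => sub_pos.2 (hα a)
  have hdiff : ∀ a, pibar a - pihat a = (1 + n a) / (D * (α - q a)) * (score a - α) :=
    fun a => by
      rw [hpibar, hpihat, hlam]
      exact mul_div_sub_div_eq_mul_score_sub hD.ne' (hgap a).ne' (hm a).ne'
  have hsum : ∑ a, (pibar a - pihat a) = 0 := by
    rw [sum_sub_distrib, hpibarSum, funext hpihat, sum_one_add_div_card_add_sum n hD.ne', sub_self]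
  have hw : ∀ a, 0 < (1 + n a) / (D * (α - q a)) := fun a =>
    div_pos (hm a) (mul_pos hD (hgap a))
  obtain ⟨b, -, hb⟩ := exists_le_of_sum_le univ_nonempty
    (by rw [sum_const_zero, ← hsum, sum_congr rfl fun a _ => hdiff a] :
      ∑ _a : A, (0 : ℝ) ≤ ∑ a, (1 + n a) / (D * (α - q a)) * (score a - α))
  have hαb : α ≤ score b := sub_nonneg.1 (nonneg_of_mul_nonneg_right hb (hw b))
  have hastar_gap : 0 ≤ score astar - α := sub_nonneg.2 (hαb.trans (hastar b))
  exact sub_nonneg.1 (hdiff astar ▸ mul_nonneg (hw astar).le hastar_gap)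

/-- Proposition 2: if `a*` maximizes AlphaZero's selection criterion, then
`π̂(a*) ≤ π̄(a*)`. -/
theorem alphazero_pihat_le_pibar
    {A : Type*} [Fintype A] [Nonempty A]
    (n q piTheta : A → ℝ) (c α : ℝ)
    (hn : ∀ b, 0 ≤ n b)
    (hN : 0 < ∑ b, n b)
    (hc : 0 < c)
    (hpiTheta : ∀ a, 0 < piTheta a)
    (hpiThetaSum : ∑ a, piTheta a = 1)
    (hα : ∀ b, q b < α)
    (lam : ℝ)
    (hlam : lam = c * Real.sqrt (∑ b, n b) / ((Fintype.card A : ℝ) + ∑ b, n b))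
    (pihat pibar : A → ℝ)
    (hpihat : ∀ a, pihat a = (1 + n a) / ((Fintype.card A : ℝ) + ∑ b, n b))
    (hpibar : ∀ a, pibar a = lam * piTheta a / (α - q a))
    (hpibarSum : ∑ a, pibar a = 1)
    (astar : A)
    (hastar : ∀ b, q b + c * piTheta b * Real.sqrt (∑ b', n b') / (1 + n b)
        ≤ q astar + c * piTheta astar * Real.sqrt (∑ b', n b') / (1 + n astar)) :
    pihat astar ≤ pibar astar :=
  alphazero_pihat_le_pibar_general n q piTheta c α hn hα lam hlam pihat pibar hpihat hpibar
    hpibarSum astar hastar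
end

section
/- Proposition 3 (second identity, UCT): An action a* maximizes the UCT selection criterion a ↦ q(a) + c·√(π_θ(a)·log(N)/(1 + n(a))) over 𝒜 if and only if a* maximizes a ↦ ∂/∂n(a) [ q·π̂(m) − λ_N^UCT·D(π_θ, π̂(m)) ] evaluated at m = n, where the counts m : 𝒜 → ℝ are extended to real values, π̂(m)(b) = (1 + m(b))/(|𝒜| + ∑_c m(c)), D(x, y) = 2 − 2·∑_a √(x(a)·y(a)), the partial derivative is taken coordinatewise in m(a), and λ_N^UCT = c·√(log(N)/(|𝒜| + N)) is held fixed at its value at m = n. -/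
/-!
Write `S = |𝒜| + ∑ m` and `π̂ = (1 + m) / S`. Moving the single count `m a` changes `π̂ b` at
rate `(δ_ab - π̂ b) / S`, so the partial derivative of `q·π̂ - λ D(π_θ, π̂)` in `m a` is
`(q a + λ √(π_θ a / π̂ a) - C) / S` with `C` independent of `a`. For `λ = c √(log N / S)` the
middle term is exactly the UCT bonus `c √(π_θ a log N / (1 + n a))`, so the gradient is an
increasing affine function of the UCT score and both have the same maximizers.
-/

open Finset Function

lemma div_sqrt_mul_eq_sqrt_div {x y : ℝ} (hx : 0 < x) (hy : 0 < y) :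
    x / Real.sqrt (x * y) = Real.sqrt (x / y) := by
  rw [Real.sqrt_mul hx.le, Real.sqrt_div hx.le]
  have := Real.sqrt_pos.mpr hx
  have := Real.sqrt_pos.mpr hy
  field_simp
  rw [Real.sq_sqrt hx.le]

section VisitDistribution

variable {A : Type*} [Fintype A]

noncomputable def visitNormalizer (m : A → ℝ) : ℝ := (Fintype.card A : ℝ) + ∑ c, m c

noncomputable def visitDistribution (m : A → ℝ) (b : A) : ℝ := (1 + m b) / visitNormalizer m

noncomputable def hellingerDivergence (x y : A → ℝ) : ℝ := 2 - 2 * ∑ a, Real.sqrt (x a * y a)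

noncomputable def regularizedValue (q p : A → ℝ) (lam : ℝ) (m : A → ℝ) : ℝ :=
  q ⬝ᵥ visitDistribution m - lam * hellingerDivergence p (visitDistribution m)

lemma mul_sqrt_div_visitDistribution_eq {n : A → ℝ} (p : A → ℝ) {c lam : ℝ}
    (hn : ∀ b, 0 ≤ n b) (hN : 1 ≤ ∑ b, n b)
    (hlam : lam = c * Real.sqrt (Real.log (∑ b, n b) / visitNormalizer n)) (a : A) :
    lam * Real.sqrt (p a / visitDistribution n a)
      = c * Real.sqrt (p a * Real.log (∑ b, n b) / (1 + n a)) := by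
  have hS : 0 < visitNormalizer n := by unfold visitNormalizer; positivity
  have ha : 0 < 1 + n a := by linarith [hn a]
  rw [hlam, mul_assoc, ← Real.sqrt_mul (div_nonneg (Real.log_nonneg hN) hS.le), visitDistribution]
  congr 2
  field_simp

variable [DecidableEq A] {m : A → ℝ}

lemma hasDerivAt_visitDistribution_update (hS : visitNormalizer m ≠ 0) (a b : A) :
    HasDerivAt (fun t => visitDistribution (update m a t) b)
      (((Pi.single a 1 : A → ℝ) b - visitDistribution m b) / visitNormalizer m) (m a) := by
  have hcoord := hasDerivAt_pi.mp (hasDerivAt_update m a (m a))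
  have hsum : HasDerivAt (fun t => visitNormalizer (update m a t)) 1 (m a) := by
    simpa [visitNormalizer] using
      (HasDerivAt.fun_sum (u := univ) fun c _ => hcoord c).const_add (Fintype.card A : ℝ)
  refine (((hcoord b).const_add 1).div hsum (by simpa using hS)).congr_deriv ?_
  rw [update_eq_self, visitDistribution]
  field_simp

lemma hasDerivAt_dotProduct_visitDistribution_update (q : A → ℝ)
    (hS : visitNormalizer m ≠ 0) (a : A) :
    HasDerivAt (fun t => q ⬝ᵥ visitDistribution (update m a t))
      ((q a - q ⬝ᵥ visitDistribution m) / visitNormalizer m) (m a) := by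
  refine (HasDerivAt.fun_sum (u := univ) fun b _ =>
    (hasDerivAt_visitDistribution_update hS a b).const_mul (q b)).congr_deriv ?_
  simp only [dotProduct, mul_div_assoc', ← Finset.sum_div, mul_sub, Finset.sum_sub_distrib]
  simp [Pi.single_apply]

lemma hasDerivAt_sum_sqrt_mul_visitDistribution_update {p : A → ℝ} (hp : ∀ b, 0 < p b)
    (hv : ∀ b, 0 < visitDistribution m b) (hS : visitNormalizer m ≠ 0) (a : A) :
    HasDerivAt (fun t => ∑ b, Real.sqrt (p b * visitDistribution (update m a t) b))
      ((Real.sqrt (p a / visitDistribution m a) - ∑ b, Real.sqrt (p b * visitDistribution m b))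
        / (2 * visitNormalizer m)) (m a) := by
  have hterm (b : A) := (((hasDerivAt_visitDistribution_update hS a b).const_mul (p b)).sqrt
    (by rw [update_eq_self]; exact (mul_pos (hp b) (hv b)).ne'))
  refine (HasDerivAt.fun_sum (u := univ) fun b _ => hterm b).congr_deriv ?_
  have hterm_eq (b : A) :
      p b * (((Pi.single a 1 : A → ℝ) b - visitDistribution m b) / visitNormalizer m) /
        (2 * Real.sqrt (p b * visitDistribution (update m a (m a)) b)) =
      ((Pi.single a 1 : A → ℝ) b * Real.sqrt (p b / visitDistribution m b)
        - Real.sqrt (p b * visitDistribution m b)) / (2 * visitNormalizer m) := by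
    have hpv := mul_pos (hp b) (hv b)
    have hs := Real.sqrt_pos.mpr hpv
    rw [update_eq_self, ← div_sqrt_mul_eq_sqrt_div (hp b) (hv b)]
    field_simp
    rw [Real.sq_sqrt hpv.le]
    ring
  simp only [hterm_eq, ← Finset.sum_div, Finset.sum_sub_distrib]
  simp [Pi.single_apply]

lemma hasDerivAt_regularizedValue_update (q : A → ℝ) {p : A → ℝ} (lam : ℝ) (hp : ∀ b, 0 < p b)
    (hv : ∀ b, 0 < visitDistribution m b) (hS : visitNormalizer m ≠ 0) (a : A) :
    HasDerivAt (fun t => regularizedValue q p lam (update m a t))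
      ((q a + lam * Real.sqrt (p a / visitDistribution m a)
        - (q ⬝ᵥ visitDistribution m + lam * ∑ b, Real.sqrt (p b * visitDistribution m b)))
        / visitNormalizer m) (m a) := by
  refine ((hasDerivAt_dotProduct_visitDistribution_update q hS a).sub
    (((hasDerivAt_sum_sqrt_mul_visitDistribution_update hp hv hS a).const_mul 2).const_sub 2
      |>.const_mul lam)).congr_deriv ?_
  field_simp
  ring

end VisitDistribution

theorem uct_selection_is_gradient_ascent_general
    {A : Type*} [Fintype A] [DecidableEq A]
    (n q piTheta : A → ℝ) (c : ℝ)
    (hn : ∀ b, 0 ≤ n b)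
    (hN : 1 < ∑ b, n b)
    (hpiTheta : ∀ a, 0 < piTheta a)
    (lam : ℝ)
    (hlam : lam = c * Real.sqrt (Real.log (∑ b, n b) / ((Fintype.card A : ℝ) + ∑ b, n b)))
    (g : A → ℝ)
    (hg : ∀ a, g a = deriv (fun t : ℝ =>
        (∑ b, q b * ((1 + Function.update n a t b) /
            ((Fintype.card A : ℝ) + ∑ c', Function.update n a t c')))
        - lam * (2 - 2 * ∑ b, Real.sqrt (piTheta b *
            ((1 + Function.update n a t b) /
              ((Fintype.card A : ℝ) + ∑ c', Function.update n a t c'))))) (n a))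
    (astar : A) :
    (∀ b, q b + c * Real.sqrt (piTheta b * Real.log (∑ b', n b') / (1 + n b))
        ≤ q astar + c * Real.sqrt (piTheta astar * Real.log (∑ b', n b') / (1 + n astar)))
    ↔ (∀ b, g b ≤ g astar) := by
  have hS : 0 < visitNormalizer n := by
    unfold visitNormalizer
    positivity
  have hv (b : A) : 0 < visitDistribution n b := div_pos (by linarith [hn b]) hS
  set C := q ⬝ᵥ visitDistribution n + lam * ∑ b, Real.sqrt (piTheta b * visitDistribution n b)
  have hg_eq (a : A) : g a = (q a + c * Real.sqrt (piTheta a * Real.log (∑ b, n b) / (1 + n a))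
      - C) / visitNormalizer n := by
    rw [hg a, ← mul_sqrt_div_visitDistribution_eq piTheta hn hN.le hlam a]
    exact (hasDerivAt_regularizedValue_update q lam hpiTheta hv hS.ne' a).deriv
  simp only [hg_eq, div_le_div_iff_of_pos_right hS, sub_le_sub_iff_right]

/-- Proposition 3 (second identity, UCT): `a*` maximizes the UCT selection criterion iff
it maximizes the partial derivative (w.r.t. real-valued counts, at the current counts,
with `λ_N^UCT` held fixed) of `q·π̂(m) − λ_N^UCT·D(πθ, π̂(m))`, where
`D(x, y) = 2 − 2·∑ √(x a · y a)`. -/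
theorem uct_selection_is_gradient_ascent
    {A : Type*} [Fintype A] [Nonempty A] [DecidableEq A]
    (n q piTheta : A → ℝ) (c : ℝ)
    (hn : ∀ b, 0 ≤ n b)
    (hN : 1 < ∑ b, n b)
    (hc : 0 < c)
    (hpiTheta : ∀ a, 0 < piTheta a)
    (hpiThetaSum : ∑ a, piTheta a = 1)
    (lam : ℝ)
    (hlam : lam = c * Real.sqrt (Real.log (∑ b, n b) / ((Fintype.card A : ℝ) + ∑ b, n b)))
    (g : A → ℝ)
    (hg : ∀ a, g a = deriv (fun t : ℝ =>
        (∑ b, q b * ((1 + Function.update n a t b) /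
            ((Fintype.card A : ℝ) + ∑ c', Function.update n a t c')))
        - lam * (2 - 2 * ∑ b, Real.sqrt (piTheta b *
            ((1 + Function.update n a t b) /
              ((Fintype.card A : ℝ) + ∑ c', Function.update n a t c'))))) (n a))
    (astar : A) :
    (∀ b, q b + c * Real.sqrt (piTheta b * Real.log (∑ b', n b') / (1 + n b))
        ≤ q astar + c * Real.sqrt (piTheta astar * Real.log (∑ b', n b') / (1 + n astar)))
    ↔ (∀ b, g b ≤ g astar) :=
  uct_selection_is_gradient_ascent_general n q piTheta c hn hN hpiTheta lam hlam g hg astar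
end

section
/- Proposition (computation of π̄, part iii): Let α ∈ ℝ satisfy α > q(b) for all b, and suppose ∑_b λ·π_θ(b)/(α − q(b)) = 1. Then α ≤ max_b q(b) + λ. -/
theorem Finset.sum_div_le_sum_div_of_le {ι 𝕜 : Type*} [Field 𝕜] [LinearOrder 𝕜]
    [IsStrictOrderedRing 𝕜] (s : Finset ι) {w d : ι → 𝕜} {c : 𝕜}
    (hw : ∀ i ∈ s, 0 ≤ w i) (hc : 0 < c) (hcd : ∀ i ∈ s, c ≤ d i) :
    ∑ i ∈ s, w i / d i ≤ (∑ i ∈ s, w i) / c := by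
  rw [Finset.sum_div]
  exact Finset.sum_le_sum fun i hi => div_le_div_of_nonneg_left (hw i hi) hc (hcd i hi)

/-- Computation of π̄, part (iii): the normalizing constant `α` satisfies
`α ≤ max_b q b + λ`. -/
theorem pibar_alpha_upper_bound
    {A : Type*} [Fintype A] [Nonempty A]
    (q piTheta : A → ℝ) (lam α : ℝ)
    (hpiTheta : ∀ a, 0 < piTheta a)
    (hpiThetaSum : ∑ a, piTheta a = 1)
    (hlam : 0 < lam)
    (hα : ∀ b, q b < α)
    (hnorm : ∑ b, lam * piTheta b / (α - q b) = 1) :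
    α ≤ Finset.univ.sup' Finset.univ_nonempty q + lam := by
  obtain ⟨b₀, -, hb₀⟩ := Finset.exists_mem_eq_sup' Finset.univ_nonempty q
  set M := Finset.univ.sup' Finset.univ_nonempty q
  have hgap : 0 < α - M := sub_pos.mpr (hb₀ ▸ hα b₀)
  have hmass : ∑ b, lam * piTheta b = lam := by rw [← Finset.mul_sum, hpiThetaSum, mul_one]
  have h : 1 ≤ lam / (α - M) := by
    calc 1 = ∑ b, lam * piTheta b / (α - q b) := hnorm.symm
      _ ≤ (∑ b, lam * piTheta b) / (α - M) := Finset.univ.sum_div_le_sum_div_of_le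
          (fun b _ => (mul_pos hlam (hpiTheta b)).le) hgap
          (fun b _ => sub_le_sub_left (Finset.le_sup' q (Finset.mem_univ b)) α)
      _ = lam / (α - M) := by rw [hmass]
  linarith [(one_le_div hgap).mp h]
end

section
/- Lemma 2: An action a maximizes the function a ↦ ∂/∂n(a) [ q·π̂(m) − λ·D_f(π̂(m), π_θ) ] evaluated at m = n (where the counts m : 𝒜 → ℝ are extended to real values, π̂(m)(b) = (1 + m(b))/(|𝒜| + ∑_c m(c)), and the partial derivative is taken coordinatewise in m(a)) if and only if a maximizes the function a ↦ q(a) − λ·f'(π̂(a)/π_θ(a)), where π̂ = π̂(n). -/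
/-!
Write `π̂(m) b = (1 + m b) / S(m)` with `S(m) = |𝒜| + ∑ m`. Moving one count `m a` changes the
numerator of `π̂ b` at rate `δ_ab` and the denominator at rate `1`, so `∂π̂(m) b / ∂m(a) =
(δ_ab - π̂(m) b) / S(m)`. The objective is a separable sum `∑ b, φ_b (π̂(m) b)` with
`φ_b x = q b * x - λ * π_θ b * f (x / π_θ b)`, whose derivative is `φ_b' x = q b - λ f'(x / π_θ b)`.
By the chain rule its partial derivative in `m a` is `(φ_a' - ∑ b, φ_b' * π̂ b) / S`: an affine
function of `φ_a'` with positive slope, so both have the same maximisers.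
-/

open Finset

noncomputable def smoothedPolicy {A : Type*} [Fintype A] (c : ℝ) (m : A → ℝ) (b : A) : ℝ :=
  (1 + m b) / (c + ∑ b', m b')

theorem HasDerivAt.const_mul_comp_div {f : ℝ → ℝ} {f'x w x : ℝ} (hf : HasDerivAt f f'x (x / w))
    (hw : w ≠ 0) : HasDerivAt (fun y => w * f (y / w)) f'x x := by
  refine ((hf.comp x ((hasDerivAt_id x).div_const w)).const_mul w).congr_deriv ?_
  field_simp

section SmoothedPolicy

variable {A : Type*} [Fintype A] [DecidableEq A] {c : ℝ} {m : A → ℝ}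

theorem hasDerivAt_smoothedPolicy_update (hS : c + ∑ b, m b ≠ 0) (a b : A) :
    HasDerivAt (fun t => smoothedPolicy c (Function.update m a t) b)
      (((Pi.single a 1 : A → ℝ) b - smoothedPolicy c m b) / (c + ∑ b', m b')) (m a) := by
  have hupdate := hasDerivAt_pi.mp (hasDerivAt_update m a (m a))
  have hnum := (hupdate b).const_add 1
  have hden := (HasDerivAt.fun_sum fun b' (_ : b' ∈ univ) => hupdate b').const_add c
  refine (hnum.div hden (by simpa using hS)).congr_deriv ?_
  simp only [Function.update_eq_self, sum_pi_single', mem_univ, if_true, smoothedPolicy]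
  field_simp

theorem hasDerivAt_sum_comp_smoothedPolicy_update (hS : c + ∑ b, m b ≠ 0) (a : A)
    {φ : A → ℝ → ℝ} {φ' : A → ℝ} (hφ : ∀ b, HasDerivAt (φ b) (φ' b) (smoothedPolicy c m b)) :
    HasDerivAt (fun t => ∑ b, φ b (smoothedPolicy c (Function.update m a t) b))
      ((φ' a - ∑ b, φ' b * smoothedPolicy c m b) / (c + ∑ b, m b)) (m a) := by
  have hcomp : ∀ b, HasDerivAt (fun t => φ b (smoothedPolicy c (Function.update m a t) b))
      (φ' b * (((Pi.single a 1 : A → ℝ) b - smoothedPolicy c m b) / (c + ∑ b', m b'))) (m a) := by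
    intro b
    have hφb := hφ b
    rw [← Function.update_eq_self a m] at hφb
    exact hφb.comp (m a) (hasDerivAt_smoothedPolicy_update hS a b)
  refine (HasDerivAt.fun_sum fun b (_ : b ∈ univ) => hcomp b).congr_deriv ?_
  simp only [mul_div_assoc', mul_sub, ← sum_div, sum_sub_distrib, Pi.single_apply, mul_ite,
    mul_one, mul_zero, sum_ite_eq', mem_univ, if_true]

end SmoothedPolicy

/-- Lemma 2: `a` maximizes the partial derivative (w.r.t. real-valued counts, at the
current counts) of `m ↦ q·π̂(m) − λ·D_f(π̂(m), πθ)` iff it maximizes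
`a ↦ q a − λ·f'(π̂ a/πθ a)`. -/
theorem argmax_partial_derivative_f_divergence
    {A : Type*} [Fintype A] [Nonempty A] [DecidableEq A]
    (n q piTheta : A → ℝ) (lam : ℝ) (f f' : ℝ → ℝ)
    (hn : ∀ b, 0 ≤ n b)
    (hpiTheta : ∀ a, 0 < piTheta a)
    (hf : ∀ x > 0, HasDerivAt f (f' x) x)
    (pihat : A → ℝ)
    (hpihat : ∀ a, pihat a = (1 + n a) / ((Fintype.card A : ℝ) + ∑ b, n b))
    (g : A → ℝ)
    (hg : ∀ a, g a = deriv (fun t : ℝ =>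
        (∑ b, q b * ((1 + Function.update n a t b) /
            ((Fintype.card A : ℝ) + ∑ c', Function.update n a t c')))
        - lam * ∑ b, piTheta b * f (((1 + Function.update n a t b) /
            ((Fintype.card A : ℝ) + ∑ c', Function.update n a t c')) / piTheta b)) (n a))
    (astar : A) :
    (∀ b, g b ≤ g astar)
    ↔ (∀ b, q b - lam * f' (pihat b / piTheta b)
        ≤ q astar - lam * f' (pihat astar / piTheta astar)) := by
  have hS : 0 < (Fintype.card A : ℝ) + ∑ b, n b :=
    add_pos_of_pos_of_nonneg (by exact_mod_cast Fintype.card_pos) (sum_nonneg fun b _ => hn b)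
  have hpihat_pos : ∀ b, 0 < pihat b := fun b => hpihat b ▸ div_pos (by linarith [hn b]) hS
  obtain rfl : pihat = smoothedPolicy (Fintype.card A) n := funext hpihat
  set φ' : A → ℝ := fun b => q b - lam * f' (smoothedPolicy (Fintype.card A) n b / piTheta b)
  have hφ : ∀ b, HasDerivAt (fun x => q b * x - lam * (piTheta b * f (x / piTheta b)))
      (φ' b) (smoothedPolicy (Fintype.card A) n b) := by
    intro b
    have hfb := hf _ (div_pos (hpihat_pos b) (hpiTheta b))
    refine (((hasDerivAt_id _).const_mul (q b)).sub
      ((hfb.const_mul_comp_div (hpiTheta b).ne').const_mul lam)).congr_deriv ?_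
    simp [φ']
  have hg_eq : ∀ a, g a = (φ' a - ∑ b, φ' b * smoothedPolicy (Fintype.card A) n b)
      / ((Fintype.card A : ℝ) + ∑ b, n b) := by
    intro a
    rw [hg a, ← (hasDerivAt_sum_comp_smoothedPolicy_update hS.ne' a hφ).deriv]
    congr 1
    ext t
    rw [mul_sum, ← sum_sub_distrib]
    rfl
  simp_rw [hg_eq, div_le_div_iff_of_pos_right hS, sub_le_sub_iff_right]
  rfl
end

section
/- Lemma 4: Suppose there exists α ∈ ℝ such that q(a) − λ·f'(π̄_f(a)/π_θ(a)) = α for all actions a, and let a*_f be an action maximizing a ↦ q(a) − λ·f'(π̂(a)/π_θ(a)) over 𝒜. Then π̂(a*_f) ≤ π̄_f(a*_f). -/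
/-! The first-order condition says that the score `a ↦ q a - λ f' (π a / π_θ a)` of `π̄_f` is
the constant `α`. The score is strictly decreasing in the probability `π a`, so if
`π̂ (a*) > π̄_f (a*)` then the score of `π̂` at `a*` is below `α`; since `π̂` and `π̄_f` both sum
to one, some `b` has `π̂ b < π̄_f b`, where the score of `π̂` exceeds `α`, contradicting the
maximality of `a*`. -/

theorem Finset.exists_lt_of_sum_eq_of_lt {ι M : Type*} [AddCommMonoid M] [LinearOrder M]
    [IsOrderedCancelAddMonoid M] {s : Finset ι} {f g : ι → M}
    (hsum : ∑ i ∈ s, f i = ∑ i ∈ s, g i) {i : ι} (hi : i ∈ s) (hlt : g i < f i) :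
    ∃ j ∈ s, f j < g j := by
  by_contra! hle
  exact (Finset.sum_lt_sum hle ⟨i, hi, hlt⟩).ne hsum.symm

theorem StrictMono.strictAnti_const_sub_mul_div {f' : ℝ → ℝ} (hf' : StrictMono f')
    {c lam : ℝ} (hc : 0 < c) (hlam : 0 < lam) (q : ℝ) :
    StrictAnti fun x ↦ q - lam * f' (x / c) := fun _ _ hxy ↦
  sub_lt_sub_left (mul_lt_mul_of_pos_left (hf' (div_lt_div_of_pos_right hxy hc)) hlam) q

theorem pihat_le_pibar_of_argmax_general
    {A : Type*} [Fintype A]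
    (q piTheta : A → ℝ) (lam : ℝ) (f' : ℝ → ℝ)
    (hpiTheta : ∀ a, 0 < piTheta a)
    (hlam : 0 < lam)
    (hf' : StrictMono f')
    (pihat pibarf : A → ℝ)
    (hpihatSum : ∑ a, pihat a = 1)
    (hpibarSum : ∑ a, pibarf a = 1)
    (α : ℝ)
    (hopt : ∀ a, q a - lam * f' (pibarf a / piTheta a) = α)
    (astarf : A)
    (hastar : ∀ b, q b - lam * f' (pihat b / piTheta b)
        ≤ q astarf - lam * f' (pihat astarf / piTheta astarf)) :
    pihat astarf ≤ pibarf astarf := by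
  by_contra! hgt
  obtain ⟨b, -, hb⟩ := Finset.exists_lt_of_sum_eq_of_lt (hpihatSum.trans hpibarSum.symm)
    (Finset.mem_univ astarf) hgt
  have hanti a := hf'.strictAnti_const_sub_mul_div (hpiTheta a) hlam (q a)
  have hstar_lt : q astarf - lam * f' (pihat astarf / piTheta astarf) < α :=
    hopt astarf ▸ hanti astarf hgt
  have hb_gt : α < q b - lam * f' (pihat b / piTheta b) := hopt b ▸ hanti b hb
  exact (hastar b).not_gt (hstar_lt.trans hb_gt)

/-- Lemma 4: under the first-order optimality condition for `π̄_f`, any action `a*_f`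
maximizing `a ↦ q a − λ·f'(π̂ a/πθ a)` satisfies `π̂(a*_f) ≤ π̄_f(a*_f)`. -/
theorem pihat_le_pibar_of_argmax
    {A : Type*} [Fintype A] [Nonempty A]
    (q piTheta : A → ℝ) (lam : ℝ) (f' : ℝ → ℝ)
    (hpiTheta : ∀ a, 0 < piTheta a)
    (hlam : 0 < lam)
    (hf' : StrictMono f')
    (pihat pibarf : A → ℝ)
    (hpihatPos : ∀ a, 0 < pihat a) (hpihatNonneg : ∀ a, 0 ≤ pihat a)
    (hpihatSum : ∑ a, pihat a = 1)
    (hpibarPos : ∀ a, 0 < pibarf a) (hpibarNonneg : ∀ a, 0 ≤ pibarf a)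
    (hpibarSum : ∑ a, pibarf a = 1)
    (α : ℝ)
    (hopt : ∀ a, q a - lam * f' (pibarf a / piTheta a) = α)
    (astarf : A)
    (hastar : ∀ b, q b - lam * f' (pihat b / piTheta b)
        ≤ q astarf - lam * f' (pihat astarf / piTheta astarf)) :
    pihat astarf ≤ pibarf astarf :=
  pihat_le_pibar_of_argmax_general q piTheta lam f' hpiTheta hlam hf' pihat pibarf hpihatSum
    hpibarSum α hopt astarf hastar
end

section
/- Tracking proposition (constant target): Suppose that for all rounds t ≥ 1 the selected action a_t satisfies p_t(a_t) ≤ π(a_t). Then for every action a and every round t ≥ 1, |π(a) − p_t(a)| ≤ (|𝒜| − 1)/(|𝒜| + t). -/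
/-!
Writing `n_t(a)` for the visit count and `K = |𝒜|`, the bound `p_t(a) ≤ π(a) + 1/(K+t)` is
equivalent to `n_t(a) ≤ π(a)(K+t)`, which holds by induction on `t`: at a round where `a` is
selected the selection rule gives it directly, and at any other round `n_t(a)` stays put while
`π(a)(K+t)` grows. Since `p_t` and `π` both sum to `1`, the deficit `π(a) - p_t(a)` is the total
excess of the other `K - 1` actions, each at most `1/(K+t)`.
-/

open Finset

section Deviation

variable {ι : Type*} [Fintype ι] [DecidableEq ι]

theorem sub_le_card_sub_one_mul_of_sum_eq {q r : ι → ℝ} {ε : ℝ} (hsum : ∑ i, q i = ∑ i, r i)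
    (hle : ∀ i, q i - r i ≤ ε) (i : ι) : r i - q i ≤ (Fintype.card ι - 1) * ε := by
  have : Nonempty ι := ⟨i⟩
  have hdeficit : r i - q i = ∑ j ∈ univ.erase i, (q j - r j) := by
    have htotal : ∑ j, (q j - r j) = 0 := by rw [sum_sub_distrib, hsum, sub_self]
    rw [← add_sum_erase _ _ (mem_univ i)] at htotal
    linarith
  calc r i - q i = ∑ j ∈ univ.erase i, (q j - r j) := hdeficit
    _ ≤ ∑ _j ∈ univ.erase i, ε := sum_le_sum fun j _ => hle j
    _ = (Fintype.card ι - 1) * ε := by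
      rw [sum_const, card_erase_of_mem (mem_univ i), card_univ, nsmul_eq_mul,
        Nat.cast_pred Fintype.card_pos]

theorem abs_sub_le_card_sub_one_mul_of_sum_eq {q r : ι → ℝ} {ε : ℝ}
    (hsum : ∑ i, q i = ∑ i, r i) (hle : ∀ i, q i - r i ≤ ε) (i : ι) :
    |r i - q i| ≤ (Fintype.card ι - 1) * ε := by
  have : Nonempty ι := ⟨i⟩
  refine abs_sub_le_iff.mpr ⟨sub_le_card_sub_one_mul_of_sum_eq hsum hle i, ?_⟩
  rcases Nat.lt_or_ge 1 (Fintype.card ι) with hcard | hcard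
  · have hε : 0 ≤ ε := by
      have : (0 : ℝ) ≤ Fintype.card ι * ε := by
        simpa [hsum] using sum_le_sum fun j (_ : j ∈ univ) => hle j
      exact (mul_nonneg_iff_of_pos_left (by exact_mod_cast Fintype.card_pos)).mp this
    have : (1 : ℝ) ≤ Fintype.card ι - 1 := by
      have : (2 : ℝ) ≤ Fintype.card ι := by exact_mod_cast hcard
      linarith
    nlinarith [hle i]
  · have : Subsingleton ι := Fintype.card_le_one_iff_subsingleton.mp hcard
    rw [Fintype.sum_subsingleton q i, Fintype.sum_subsingleton r i] at hsum
    have hone : Fintype.card ι = 1 := le_antisymm hcard Fintype.card_pos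
    simp [hsum, hone]

end Deviation

section LaplaceEstimate

variable {A : Type*} [DecidableEq A]

def visitCount (act : ℕ → A) (t : ℕ) (a : A) : ℕ :=
  ((Icc 1 t).filter (fun i => act i = a)).card

theorem visitCount_zero (act : ℕ → A) (a : A) : visitCount act 0 a = 0 := by
  simp [visitCount]

theorem visitCount_succ_of_ne {act : ℕ → A} {t : ℕ} {a : A} (h : act (t + 1) ≠ a) :
    visitCount act (t + 1) a = visitCount act t a := by
  rw [visitCount, ← insert_Icc_right_eq_Icc_add_one (by omega), filter_insert, if_neg h,
    visitCount]

variable [Fintype A]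

/-- The paper's `p_t(a)`: the add-one (Laplace) estimate of the frequency of `a`. -/
noncomputable def laplaceEstimate (act : ℕ → A) (t : ℕ) (a : A) : ℝ :=
  ((visitCount act t a : ℝ) + 1) / ((Fintype.card A : ℝ) + t)

theorem sum_visitCount (act : ℕ → A) (t : ℕ) : ∑ a, visitCount act t a = t := by
  simp only [visitCount]
  rw [← card_eq_sum_card_fiberwise fun i _ => mem_univ (act i), Nat.card_Icc,
    Nat.add_sub_cancel]

theorem sum_laplaceEstimate [Nonempty A] (act : ℕ → A) (t : ℕ) :
    ∑ a, laplaceEstimate act t a = 1 := by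
  have hpos : (0 : ℝ) < Fintype.card A + t := by positivity
  simp only [laplaceEstimate, ← sum_div, sum_add_distrib, ← Nat.cast_sum, sum_visitCount,
    sum_const, card_univ, nsmul_eq_mul, mul_one]
  rw [add_comm, div_self hpos.ne']

variable {pi : A → ℝ} {act : ℕ → A}

theorem visitCount_le_of_laplaceEstimate_le (hpi : ∀ a, 0 ≤ pi a)
    (hsel : ∀ t, 1 ≤ t → laplaceEstimate act t (act t) ≤ pi (act t)) (t : ℕ) (a : A) :
    (visitCount act t a : ℝ) ≤ pi a * ((Fintype.card A : ℝ) + t) := by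
  induction t with
  | zero => simpa [visitCount_zero] using mul_nonneg (hpi a) (Nat.cast_nonneg _)
  | succ t ih =>
    push_cast
    by_cases hact : act (t + 1) = a
    · have h := hsel (t + 1) (by omega)
      rw [hact, laplaceEstimate, div_le_iff₀ (by positivity)] at h
      push_cast at h
      linarith
    · rw [visitCount_succ_of_ne hact]
      nlinarith [hpi a]

theorem laplaceEstimate_sub_le [Nonempty A] (hpi : ∀ a, 0 ≤ pi a)
    (hsel : ∀ t, 1 ≤ t → laplaceEstimate act t (act t) ≤ pi (act t)) (t : ℕ) (a : A) :
    laplaceEstimate act t a - pi a ≤ 1 / ((Fintype.card A : ℝ) + t) := by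
  have hcount := visitCount_le_of_laplaceEstimate_le hpi hsel t a
  have hpos : (0 : ℝ) < Fintype.card A + t := by positivity
  rw [laplaceEstimate, div_sub' hpos.ne']
  gcongr
  linarith

end LaplaceEstimate

theorem tracking_constant_target_general
    {A : Type*} [Fintype A] [DecidableEq A]
    (pi : A → ℝ) (hpi : ∀ a, 0 ≤ pi a) (hsum : ∑ a, pi a = 1)
    (act : ℕ → A)
    (p : ℕ → A → ℝ)
    (hp : ∀ t a, p t a =
        ((((Finset.Icc 1 t).filter (fun i => act i = a)).card : ℝ) + 1)
          / ((Fintype.card A : ℝ) + t))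
    (hsel : ∀ t, 1 ≤ t → p t (act t) ≤ pi (act t)) :
    ∀ a, ∀ t, 1 ≤ t →
      |pi a - p t a| ≤ ((Fintype.card A : ℝ) - 1) / ((Fintype.card A : ℝ) + t) := by
  obtain rfl : p = laplaceEstimate act := funext fun t => funext (hp t)
  intro a t _
  have : Nonempty A := ⟨a⟩
  rw [div_eq_mul_one_div]
  exact abs_sub_le_card_sub_one_mul_of_sum_eq (by rw [sum_laplaceEstimate, hsum])
    (fun b => laplaceEstimate_sub_le hpi hsel t b) a

/-- Tracking proposition (constant target): if at every round `t ≥ 1` the selected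
action `a_t` satisfies `p_t(a_t) ≤ π(a_t)`, then for every action `a` and round `t ≥ 1`,
`|π(a) − p_t(a)| ≤ (|𝒜| − 1)/(|𝒜| + t)`. -/
theorem tracking_constant_target
    {A : Type*} [Fintype A] [Nonempty A] [DecidableEq A]
    (pi : A → ℝ) (hpi : ∀ a, 0 ≤ pi a) (hsum : ∑ a, pi a = 1)
    (act : ℕ → A)
    (p : ℕ → A → ℝ)
    (hp : ∀ t a, p t a =
        ((((Finset.Icc 1 t).filter (fun i => act i = a)).card : ℝ) + 1)
          / ((Fintype.card A : ℝ) + t))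
    (hsel : ∀ t, 1 ≤ t → p t (act t) ≤ pi (act t)) :
    ∀ a, ∀ t, 1 ≤ t →
      |pi a - p t a| ≤ ((Fintype.card A : ℝ) - 1) / ((Fintype.card A : ℝ) + t) :=
  tracking_constant_target_general pi hpi hsum act p hp hsel
end

section
/- Upper tracking bound: Suppose that for all rounds t ≥ 1 the selected action a_t satisfies p_t(a_t) ≤ π(a_t). Then for every action a and every round t ≥ 1, p_t(a) ≤ π(a) + 1/(|𝒜| + t). -/
/-!
Write `N_t(a)` for the number of rounds `i ≤ t` with `a_i = a` and `d_t = |𝒜| + t`. We show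
`N_t(a) ≤ π(a) d_t` by induction on `t`, which is the claim after multiplying out `p_t(a)`.
In a round where `a` is not selected, `N_t(a)` stays put while `π(a) d_t` grows. In a round
where `a` is selected, the selection rule `p_t(a) ≤ π(a)` reads `N_t(a) + 1 ≤ π(a) d_t`, which is
even stronger than needed.
-/

open Finset

theorem card_filter_Icc_succ_eq {A : Type*} [DecidableEq A] (act : ℕ → A) (a : A) (t : ℕ) :
    #{i ∈ Icc 1 (t + 1) | act i = a} =
      #{i ∈ Icc 1 t | act i = a} + if act (t + 1) = a then 1 else 0 := by
  rw [← Order.succ_eq_add_one, ← insert_Icc_right_eq_Icc_succ (by simp), filter_insert]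
  split_ifs <;> simp

theorem card_filter_Icc_le_mul {A : Type*} [DecidableEq A] (act : ℕ → A) (a : A) {x c : ℝ}
    (hx : 0 ≤ x) (hc : 0 ≤ c)
    (hsel : ∀ t, 1 ≤ t → act t = a → (#{i ∈ Icc 1 t | act i = a} : ℝ) + 1 ≤ x * (c + t))
    (t : ℕ) : (#{i ∈ Icc 1 t | act i = a} : ℝ) ≤ x * (c + t) := by
  induction t with
  | zero => simpa using mul_nonneg hx hc
  | succ t ih =>
    by_cases h : act (t + 1) = a
    · linarith [hsel (t + 1) (by omega) h]
    · rw [card_filter_Icc_succ_eq, if_neg h, add_zero]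
      calc (#{i ∈ Icc 1 t | act i = a} : ℝ) ≤ x * (c + t) := ih
        _ ≤ x * (c + (t + 1 : ℕ)) := by gcongr; simp

theorem tracking_upper_bound_general
    {A : Type*} [Fintype A] [DecidableEq A]
    (pi : A → ℝ) (hpi : ∀ a, 0 ≤ pi a)
    (act : ℕ → A)
    (p : ℕ → A → ℝ)
    (hp : ∀ t a, p t a =
        ((((Finset.Icc 1 t).filter (fun i => act i = a)).card : ℝ) + 1)
          / ((Fintype.card A : ℝ) + t))
    (hsel : ∀ t, 1 ≤ t → p t (act t) ≤ pi (act t)) :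
    ∀ a, ∀ t, 1 ≤ t →
      p t a ≤ pi a + 1 / ((Fintype.card A : ℝ) + t) := by
  intro a t ht
  have hden (s : ℕ) (hs : 1 ≤ s) : (0 : ℝ) < Fintype.card A + s := by
    have : (1 : ℝ) ≤ s := by exact_mod_cast hs
    positivity
  have hcount := card_filter_Icc_le_mul act a (hpi a) (Nat.cast_nonneg (Fintype.card A))
    (fun s hs hs_eq => by
      have := hsel s hs
      rwa [hp, hs_eq, div_le_iff₀ (hden s hs)] at this) t
  rw [hp, div_le_iff₀ (hden t ht), add_mul, one_div_mul_cancel (hden t ht).ne']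
  linarith

/-- Upper tracking bound: if at every round `t ≥ 1` the selected action `a_t` satisfies
`p_t(a_t) ≤ π(a_t)`, then for every action `a` and round `t ≥ 1`,
`p_t(a) ≤ π(a) + 1/(|𝒜| + t)`. -/
theorem tracking_upper_bound
    {A : Type*} [Fintype A] [Nonempty A] [DecidableEq A]
    (pi : A → ℝ) (hpi : ∀ a, 0 ≤ pi a) (hsum : ∑ a, pi a = 1)
    (act : ℕ → A)
    (p : ℕ → A → ℝ)
    (hp : ∀ t a, p t a =
        ((((Finset.Icc 1 t).filter (fun i => act i = a)).card : ℝ) + 1)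
          / ((Fintype.card A : ℝ) + t))
    (hsel : ∀ t, 1 ≤ t → p t (act t) ≤ pi (act t)) :
    ∀ a, ∀ t, 1 ≤ t →
      p t a ≤ pi a + 1 / ((Fintype.card A : ℝ) + t) :=
  tracking_upper_bound_general pi hpi act p hp hsel
end
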